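/- Let T be a set of histories with labels in Y and with a fixed set of leaf labels X ⊆ Y, i.e., L(t) = X for all t ∈ T. Then every history t ∈ D(T) satisfies L(t) = X. -/

import Mathlib

universe u v

/-- A node of a history sDAG: either the universal ancestor (UA) node `ρ`,
or a node carrying a label `ℓ : Y` and a subpartition `U : Set (Set Y)`. -/
inductive HNode (Y : Type u) : Type u
  | ua : HNode Y
  | node : Y → Set (Set Y) → HNode Y

namespace HistorySDAGs

variable {Y : Type u}

/-- `U ∈ Part(Y)`: `U` is a set of pairwise disjoint nonempty (finite) clades with `|U| ≠ 1`. -/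
def IsPart (U : Set (Set Y)) : Prop :=
  (∀ C ∈ U, C ≠ ∅) ∧
  (∀ C₁ ∈ U, ∀ C₂ ∈ U, C₁ ≠ C₂ → Disjoint C₁ C₂) ∧
  (∀ C, U ≠ {C}) ∧
  U.Finite ∧ ∀ C ∈ U, C.Finite

open Classical in
/-- The clade union of a node. -/
noncomputable def cladeUnion : HNode Y → Set Y
  | HNode.ua => ∅
  | HNode.node ℓ U => if U = ∅ then {ℓ} else ⋃₀ U

/-- Reachability via directed edges in `E`. -/
def Reach (E : Set (HNode Y × HNode Y)) (a b : HNode Y) : Prop :=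
  Relation.ReflTransGen (fun x y => (x, y) ∈ E) a b

/-- `(V, E)` is a history sDAG on labels `Y`. -/
structure IsHSDAG (V : Set (HNode Y)) (E : Set (HNode Y × HNode Y)) : Prop where
  ua_mem : HNode.ua ∈ V
  valid : ∀ ℓ U, HNode.node ℓ U ∈ V → IsPart U
  edge_mem : ∀ e ∈ E, e.1 ∈ V ∧ e.2 ∈ V
  reach_ua : ∀ v ∈ V, Reach E HNode.ua v
  no_in_ua : ∀ v : HNode Y, (v, HNode.ua) ∉ E
  edge_clade : ∀ ℓ U v, (HNode.node ℓ U, v) ∈ E → cladeUnion v ∈ U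
  clade_cov : ∀ ℓ U, HNode.node ℓ U ∈ V → ∀ C ∈ U,
      ∃ v, (HNode.node ℓ U, v) ∈ E ∧ cladeUnion v = C

/-- Every node-clade pair of `V` has exactly one descendant edge in `E`. -/
def UniqueDesc (V : Set (HNode Y)) (E : Set (HNode Y × HNode Y)) : Prop :=
  ∀ ℓ U, HNode.node ℓ U ∈ V → ∀ C ∈ U,
    ∃! vc, (HNode.node ℓ U, vc) ∈ E ∧ cladeUnion vc = C

/-- `(V, E)` is a history: a history sDAG in which `ρ` has exactly one child and
each node-clade pair has exactly one descendant edge. -/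
def IsHistory (V : Set (HNode Y)) (E : Set (HNode Y × HNode Y)) : Prop :=
  IsHSDAG V E ∧ (∃! v, (HNode.ua, v) ∈ E) ∧ UniqueDesc V E

/-- `(Vs, Es)` is a subhistory of `(V, E)` with root node `vr`. -/
structure IsSubhistoryRooted (V : Set (HNode Y)) (E : Set (HNode Y × HNode Y))
    (Vs : Set (HNode Y)) (Es : Set (HNode Y × HNode Y)) (vr : HNode Y) : Prop where
  subV : Vs ⊆ V
  subE : Es ⊆ E
  ua_not_mem : HNode.ua ∉ Vs
  edge_mem : ∀ e ∈ Es, e.1 ∈ Vs ∧ e.2 ∈ Vs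
  root_mem : vr ∈ Vs
  reach_root : ∀ v ∈ Vs, Reach Es vr v
  unique_desc : ∀ ℓ U, HNode.node ℓ U ∈ Vs → ∀ C ∈ U,
      ∃! vc, (HNode.node ℓ U, vc) ∈ Es ∧ cladeUnion vc = C

/-- `(Vs, Es)` is a subhistory of `(V, E)`. -/
def IsSubhistory (V : Set (HNode Y)) (E : Set (HNode Y × HNode Y))
    (Vs : Set (HNode Y)) (Es : Set (HNode Y × HNode Y)) : Prop :=
  ∃ vr, IsSubhistoryRooted V E Vs Es vr

/-- `(Vt, Et)` is a history in (a trim of) the history sDAG `(V, E)`. -/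
def HistoryIn (V : Set (HNode Y)) (E : Set (HNode Y × HNode Y))
    (Vt : Set (HNode Y)) (Et : Set (HNode Y × HNode Y)) : Prop :=
  Vt ⊆ V ∧ Et ⊆ E ∧ IsHistory Vt Et

/-- The set of labels of leaf nodes in a node set. -/
def leafLabels (Vt : Set (HNode Y)) : Set Y := {ℓ | HNode.node ℓ ∅ ∈ Vt}

/-- A candidate history/graph: a pair of a node set and an edge set. -/
abbrev Hist (Y : Type u) := Set (HNode Y) × Set (HNode Y × HNode Y)

/-- The node set of the history sDAG constructed from the collection `T`. -/
def unionV (T : Set (Hist Y)) : Set (HNode Y) := ⋃ t ∈ T, t.1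

/-- The edge set of the history sDAG constructed from the collection `T`. -/
def unionE (T : Set (Hist Y)) : Set (HNode Y × HNode Y) := ⋃ t ∈ T, t.2

/-- The node set of the complete history sDAG on labels `Y`. -/
def completeV (Y : Type u) : Set (HNode Y) :=
  {v | v = HNode.ua ∨ ∃ ℓ U, v = HNode.node ℓ U ∧ IsPart U}

/-- The edge set of the complete history sDAG on labels `Y`. -/
def completeE (Y : Type u) : Set (HNode Y × HNode Y) :=
  {e | e.1 ∈ completeV Y ∧ e.2 ∈ completeV Y ∧ e.2 ≠ HNode.ua ∧
    (e.1 = HNode.ua ∨ ∃ ℓ U, e.1 = HNode.node ℓ U ∧ cladeUnion e.2 ∈ U)}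

variable {W : Type v}

/-- The weight `g_f` of a subgraph with edge set `Es`: the sum of `f` over all edges. -/
noncomputable def gweight [AddCommMonoid W] (f : HNode Y × HNode Y → W)
    (Es : Set (HNode Y × HNode Y)) : W := ∑ᶠ e ∈ Es, f e

/-- The order is total on the subset `S` of `W`. -/
def TotalOn [PartialOrder W] (S : Set W) : Prop := ∀ a ∈ S, ∀ b ∈ S, a ≤ b ∨ b ≤ a

/-- The order respects addition on the subset `S` of `W`. -/
def RespectsAdd [AddCommMonoid W] [PartialOrder W] (S : Set W) : Prop :=
  ∀ a ∈ S, ∀ b ∈ S, ∀ c : W, a < b ↔ a + c < b + c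

/-- Weights of subhistories of `(V, E)` rooted at `v`. -/
def subWeights [AddCommMonoid W] (f : HNode Y × HNode Y → W)
    (V : Set (HNode Y)) (E : Set (HNode Y × HNode Y)) (v : HNode Y) : Set W :=
  {w | ∃ Vs Es, IsSubhistoryRooted V E Vs Es v ∧ w = gweight f Es}

/-- Weights of augmented subhistories below the node-clade pair `(v, C)`. -/
def augWeights [AddCommMonoid W] (f : HNode Y × HNode Y → W)
    (V : Set (HNode Y)) (E : Set (HNode Y × HNode Y)) (v : HNode Y) (C : Set Y) : Set W :=
  {w | ∃ vc Vs Es, (v, vc) ∈ E ∧ cladeUnion vc = C ∧ IsSubhistoryRooted V E Vs Es vc ∧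
    w = gweight f (insert (v, vc) Es)}

/-- Weights of histories in `(V, E)`. -/
def historyWeights [AddCommMonoid W] (f : HNode Y × HNode Y → W)
    (V : Set (HNode Y)) (E : Set (HNode Y × HNode Y)) : Set W :=
  {w | ∃ Vt Et, HistoryIn V E Vt Et ∧ w = gweight f Et}

/-- `W` is clade-ordered with respect to `f` and `(V, E)`. -/
def CladeOrdered [AddCommMonoid W] [PartialOrder W] (f : HNode Y × HNode Y → W)
    (V : Set (HNode Y)) (E : Set (HNode Y × HNode Y)) : Prop :=
  (∀ v ∈ V, v ≠ HNode.ua →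
      TotalOn (subWeights f V E v) ∧ RespectsAdd (subWeights f V E v)) ∧
  (∀ ℓ U, HNode.node ℓ U ∈ V → ∀ C ∈ U,
      TotalOn (augWeights f V E (HNode.node ℓ U) C) ∧
      RespectsAdd (augWeights f V E (HNode.node ℓ U) C)) ∧
  TotalOn (historyWeights f V E)

/-- The minimum-weight histories in `(V, E)` with respect to `g_f`. -/
def minHistories [AddCommMonoid W] [PartialOrder W] (f : HNode Y × HNode Y → W)
    (V : Set (HNode Y)) (E : Set (HNode Y × HNode Y)) : Set (Hist Y) :=
  {t | HistoryIn V E t.1 t.2 ∧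
    ∀ t' : Hist Y, HistoryIn V E t'.1 t'.2 → gweight f t.2 ≤ gweight f t'.2}

open Classical in
/-- The map `q` collapsing the edge `(vp, vc)`, sending both `vp` and `vc` to `vp'`. -/
noncomputable def collapseMap (vp vc vp' : HNode Y) (v : HNode Y) : HNode Y :=
  if v = vp ∨ v = vc then vp' else v

/-- The history obtained by collapsing the edge `(vp, vc)` (into `vp'`) in `t`. -/
noncomputable def collapseEdgeHist (vp vc vp' : HNode Y) (t : Hist Y) : Hist Y :=
  (collapseMap vp vc vp' '' t.1,
   (fun e : HNode Y × HNode Y => (collapseMap vp vc vp' e.1, collapseMap vp vc vp' e.2)) ''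
     (t.2 \ {(vp, vc)}))

/-- The new parent node `(ℓ_p, (U_p ∪ U_c) \ {CU(v_c)})` formed when collapsing an edge. -/
noncomputable def newParent : HNode Y → HNode Y → HNode Y
  | HNode.node ℓp Up, HNode.node ℓc Uc =>
      HNode.node ℓp ((Up ∪ Uc) \ {cladeUnion (HNode.node ℓc Uc)})
  | v, _ => v

/-- `t'` results from `t` by collapsing one label-collapsible edge. -/
def LabelCollapseStep (t t' : Hist Y) : Prop :=
  ∃ ℓ Up Uc, (HNode.node ℓ Up, HNode.node ℓ Uc) ∈ t.2 ∧ Uc ≠ ∅ ∧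
    t' = collapseEdgeHist (HNode.node ℓ Up) (HNode.node ℓ Uc)
        (newParent (HNode.node ℓ Up) (HNode.node ℓ Uc)) t

/-- `t` is label-collapsed: it has no label-collapsible edge. -/
def LabelCollapsed (t : Hist Y) : Prop :=
  ∀ ℓ Up Uc, (HNode.node ℓ Up, HNode.node ℓ Uc) ∈ t.2 → Uc = ∅

/-- `(vp, vc)` is a label-collapsible edge of `G`. -/
def LabelCollapsibleEdge (G : Hist Y) (vp vc : HNode Y) : Prop :=
  (vp, vc) ∈ G.2 ∧ ∃ ℓ Up Uc, vp = HNode.node ℓ Up ∧ vc = HNode.node ℓ Uc ∧ Uc ≠ ∅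

/-- `T` is a label-collapsible edge cover of `G`. -/
def LabelCollapsibleEdgeCover (G : Hist Y) (T : Set (Hist Y)) : Prop :=
  (∀ t ∈ T, HistoryIn G.1 G.2 t.1 t.2) ∧
  (∀ e ∈ G.2, ∃ t ∈ T, e ∈ t.2) ∧
  (∀ vp vc, LabelCollapsibleEdge G vp vc →
    ∀ Vs Es, IsSubhistory G.1 G.2 Vs Es → (vp, vc) ∈ Es →
      ∃ t ∈ T, Vs ⊆ t.1 ∧ Es ⊆ t.2)

open Classical in
/-- Collapsing the edge `(vp, vc)` in the history sDAG `G`, via `E⁺`, `R`, `E⁻`, `E'`, `V'`. -/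
noncomputable def collapseDAGEdge (vp vc : HNode Y) (G : Hist Y) : Hist Y :=
  let vp' := newParent vp vc
  let Eplus : Set (HNode Y × HNode Y) :=
    (G.2 ∪ {e | ∃ v, e = (v, vp') ∧ (v, vp) ∈ G.2}
        ∪ {e | ∃ v, e = (vp', v) ∧ (vp, v) ∈ G.2 ∧ cladeUnion v ≠ cladeUnion vc}
        ∪ {e | ∃ v, e = (vp', v) ∧ (vc, v) ∈ G.2}) \ {(vp, vc)}
  let R : Set (HNode Y × HNode Y) :=
    if ∃ v, (vp, v) ∈ Eplus ∧ cladeUnion v = cladeUnion vc then ∅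
    else {e ∈ Eplus | e.2 = vp}
  let Eminus := Eplus \ R
  let E' := {e ∈ Eminus | Reach Eminus HNode.ua e.1}
  ({v | ∃ e ∈ E', v = e.1 ∨ v = e.2}, E')

/-- `t'` is obtained from `t` by a subhistory swap, replacing a subhistory of `t` by a
conforming subhistory of some history in `S`. -/
def SwapStepUsing (S : Set (Hist Y)) (t t' : Hist Y) : Prop :=
  ∃ t₂ ∈ S, ∃ Vs' Es' vr' vp,
    IsSubhistoryRooted t₂.1 t₂.2 Vs' Es' vr' ∧ (vp, vr') ∈ t₂.2 ∧
    ∃ Vs Es vr, IsSubhistoryRooted t.1 t.2 Vs Es vr ∧ (vp, vr) ∈ t.2 ∧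
      leafLabels Vs = leafLabels Vs' ∧
      t' = ((t.1 \ Vs) ∪ Vs', (t.2 \ (Es ∪ {(vp, vr)})) ∪ (Es' ∪ {(vp, vr')}))

/-- Leaves of an abstract rooted graph. -/
def IsLeafIn {α : Type v} (nodes : Set α) (edges : Set (α × α)) (x : α) : Prop :=
  x ∈ nodes ∧ ∀ c, (x, c) ∉ edges

/-- Reachability via directed edges in an abstract graph. -/
def GReach {α : Type v} (edges : Set (α × α)) (a b : α) : Prop :=
  Relation.ReflTransGen (fun x y => (x, y) ∈ edges) a b

/-- An (internally) labeled tree: a rooted multifurcating tree with no unifurcations,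
with node labels in `Y` that are injective on leaves. -/
structure IsLabeledTree {α : Type v} (nodes : Set α) (edges : Set (α × α))
    (root : α) (lab : α → Y) : Prop where
  root_mem : root ∈ nodes
  edge_mem : ∀ e ∈ edges, e.1 ∈ nodes ∧ e.2 ∈ nodes
  reach_root : ∀ x ∈ nodes, GReach edges root x
  unique_parent : ∀ x a b, (a, x) ∈ edges → (b, x) ∈ edges → a = b
  no_parent_root : ∀ a, (a, root) ∉ edges
  acyclic : ∀ x, ¬ Relation.TransGen (fun a b => (a, b) ∈ edges) x x
  no_unif : ∀ x ∈ nodes, ¬ (∃! c, (x, c) ∈ edges)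
  leaf_inj : ∀ x y, IsLeafIn nodes edges x → IsLeafIn nodes edges y → lab x = lab y → x = y
  finite : nodes.Finite

/-- The set `C_w` of leaf labels below a node `w` of an abstract labeled tree. -/
def leavesBelow {α : Type v} (nodes : Set α) (edges : Set (α × α)) (lab : α → Y) (w : α) :
    Set Y :=
  {y | ∃ u, IsLeafIn nodes edges u ∧ GReach edges w u ∧ y = lab u}

/-- The history sDAG node `v_w` associated to a node `w` of a labeled tree. -/
def treeNodeOf {α : Type v} (nodes : Set α) (edges : Set (α × α)) (lab : α → Y) (w : α) :
    HNode Y :=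
  HNode.node (lab w) {C | ∃ w', (w, w') ∈ edges ∧ C = leavesBelow nodes edges lab w'}

/-- The node set `V_t` of the history associated to a labeled tree. -/
def treeToHistV {α : Type v} (nodes : Set α) (edges : Set (α × α)) (lab : α → Y) :
    Set (HNode Y) :=
  insert HNode.ua (treeNodeOf nodes edges lab '' nodes)

/-- The edge set `E_t` of the history associated to a labeled tree. -/
def treeToHistE {α : Type v} (nodes : Set α) (edges : Set (α × α)) (root : α) (lab : α → Y) :
    Set (HNode Y × HNode Y) :=
  insert (HNode.ua, treeNodeOf nodes edges lab root)
    {e | ∃ w₁ w₂, (w₁, w₂) ∈ edges ∧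
      e = (treeNodeOf nodes edges lab w₁, treeNodeOf nodes edges lab w₂)}

/-! In a history every node is reached from the unique child `v₀` of `ρ`, and clade unions
shrink along edges, so every leaf label lies in `CU(v₀)`; conversely, since the clades of a
node are proper subsets of its clade union, descending from `v₀` towards any `y ∈ CU(v₀)`
ends at the leaf `(y, ∅)`. Hence `L(t) = CU(v₀)` is determined by the edge `(ρ, v₀)` alone,
and that edge of a history in `D(T)` is an edge of some history in `T`. -/

lemma IsPart.ssubset_sUnion {U : Set (Set Y)} (hU : IsPart U) {C : Set Y} (hC : C ∈ U) :
    C ⊂ ⋃₀ U := by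
  obtain ⟨hne, hdisj, hns, -, -⟩ := hU
  obtain ⟨C', hC', hC'C⟩ : ∃ C' ∈ U, C' ≠ C := by
    by_contra! h
    exact hns C (Set.eq_singleton_iff_unique_mem.mpr ⟨hC, h⟩)
  obtain ⟨x, hx⟩ := Set.nonempty_iff_ne_empty.mpr (hne C' hC')
  refine Set.ssubset_iff_of_subset (Set.subset_sUnion_of_mem hC) |>.mpr ⟨x, ⟨C', hC', hx⟩, ?_⟩
  exact fun hxC => (hdisj C' hC' C hC hC'C).ne_of_mem hx hxC rfl

lemma cladeUnion_node_of_ne_empty {ℓ : Y} {U : Set (Set Y)} (hU : U ≠ ∅) :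
    cladeUnion (HNode.node ℓ U) = ⋃₀ U := by
  simp [cladeUnion, hU]

namespace IsHSDAG

variable {V : Set (HNode Y)} {E : Set (HNode Y × HNode Y)}

lemma cladeUnion_finite (hG : IsHSDAG V E) {v : HNode Y} (hv : v ∈ V) :
    (cladeUnion v).Finite := by
  cases v with
  | ua => simp [cladeUnion]
  | node ℓ U =>
    obtain ⟨-, -, -, hUfin, hCfin⟩ := hG.valid ℓ U hv
    by_cases hU : U = ∅
    · simp [cladeUnion, hU]
    · rw [cladeUnion_node_of_ne_empty hU]
      exact hUfin.sUnion hCfin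

lemma cladeUnion_subset_of_edge (hG : IsHSDAG V E) {ℓ : Y} {U : Set (Set Y)} {w : HNode Y}
    (hw : (HNode.node ℓ U, w) ∈ E) : cladeUnion w ⊆ cladeUnion (HNode.node ℓ U) := by
  have hwU := hG.edge_clade ℓ U w hw
  rw [cladeUnion_node_of_ne_empty (Set.nonempty_of_mem hwU).ne_empty]
  exact Set.subset_sUnion_of_mem hwU

lemma cladeUnion_subset_of_reach (hG : IsHSDAG V E) {v w : HNode Y} (hvw : Reach E v w)
    (hv : v ≠ HNode.ua) : cladeUnion w ⊆ cladeUnion v := by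
  revert hv
  induction hvw using Relation.ReflTransGen.head_induction_on with
  | refl => exact fun _ => subset_rfl
  | @head a b hab _ ih =>
    intro hv
    have hb : b ≠ HNode.ua := by
      rintro rfl
      exact hG.no_in_ua a hab
    cases a with
    | ua => exact absurd rfl hv
    | node ℓ U => exact (ih hb).trans (hG.cladeUnion_subset_of_edge hab)

lemma leaf_mem_of_mem_cladeUnion (hG : IsHSDAG V E) {v : HNode Y} (hv : v ∈ V) {y : Y}
    (hy : y ∈ cladeUnion v) : HNode.node y ∅ ∈ V := by
  induction hn : (cladeUnion v).ncard using Nat.strong_induction_on generalizing v with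
  | _ n ih =>
    cases v with
    | ua => simp [cladeUnion] at hy
    | node ℓ U =>
      by_cases hU : U = ∅
      · subst hU
        obtain rfl : y = ℓ := by simpa [cladeUnion] using hy
        exact hv
      · rw [cladeUnion_node_of_ne_empty hU] at hy hn
        obtain ⟨C, hCU, hyC⟩ := hy
        obtain ⟨w, hw, rfl⟩ := hG.clade_cov ℓ U hv C hCU
        have hlt : (cladeUnion w).ncard < (⋃₀ U).ncard := by
          refine Set.ncard_lt_ncard ((hG.valid ℓ U hv).ssubset_sUnion hCU) ?_
          simpa [cladeUnion_node_of_ne_empty hU] using hG.cladeUnion_finite hv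
        exact ih _ (hn ▸ hlt) (hG.edge_mem _ hw).2 hyC rfl

end IsHSDAG

lemma IsHistory.leafLabels_eq_cladeUnion {V : Set (HNode Y)} {E : Set (HNode Y × HNode Y)}
    (h : IsHistory V E) {v₀ : HNode Y} (h₀ : (HNode.ua, v₀) ∈ E) :
    leafLabels V = cladeUnion v₀ := by
  obtain ⟨hG, ⟨r, -, hr⟩, -⟩ := h
  have hv₀ : v₀ ≠ HNode.ua := by
    rintro rfl
    exact hG.no_in_ua _ h₀
  ext y
  constructor
  · intro hy
    rcases (hG.reach_ua _ hy).cases_head with hua | ⟨c, hc, hcy⟩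
    · cases hua
    · obtain rfl : c = v₀ := (hr c hc).trans (hr v₀ h₀).symm
      exact hG.cladeUnion_subset_of_reach hcy hv₀ (by simp [cladeUnion])
  · exact hG.leaf_mem_of_mem_cladeUnion (hG.edge_mem _ h₀).2

/-- Observation `fixedleaves`: if all histories in `T` have leaf label
set `X`, then so does every history in the history sDAG constructed from `T`. -/
theorem fixed_leaves
    (T : Set (Hist Y)) (hT : ∀ t ∈ T, IsHistory t.1 t.2)
    (X : Set Y) (hX : ∀ t ∈ T, leafLabels t.1 = X)
    (t : Hist Y) (ht : HistoryIn (unionV T) (unionE T) t.1 t.2) :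
    leafLabels t.1 = X := by
  obtain ⟨-, hE, hhist⟩ := ht
  obtain ⟨v₀, h₀, -⟩ := hhist.2.1
  obtain ⟨t', ht', h₀'⟩ : ∃ t' ∈ T, (HNode.ua, v₀) ∈ t'.2 := by
    simpa [unionE] using hE h₀
  rw [hhist.leafLabels_eq_cladeUnion h₀, ← (hT t' ht').leafLabels_eq_cladeUnion h₀', hX t' ht']

end HistorySDAGs
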